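/- arXiv:2501.07522 — 2 statements merged into one kernel-verified Lean document; each statement's English description precedes it below -/
import Mathlib

section
/- For every n ≥ 2 and for each G among the four n-adic Lodha–Moore groups G_0(n), yG(n), Gy(n), yGy(n), the center of G is trivial. -/
namespace LM

/-- Group structure on the self-homeomorphisms of a space, with the convention
`(f * g) ξ = f (g ξ)`.  A product `f₁ f₂ ⋯ f_k` in the paper's convention
(`fg = g ∘ f`) corresponds to `f_k * ⋯ * f₂ * f₁` here. -/
instance homeoGroup {X : Type*} [TopologicalSpace X] : Group (X ≃ₜ X) where
  mul f g := g.trans f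
  one := Homeomorph.refl X
  inv := Homeomorph.symm
  mul_assoc _ _ _ := Homeomorph.ext fun _ => rfl
  one_mul _ := Homeomorph.ext fun _ => rfl
  mul_one _ := Homeomorph.ext fun _ => rfl
  inv_mul_cancel f := Homeomorph.ext fun x => f.symm_apply_apply x

/-- The `n`-adic Cantor set `{0, …, n-1}^ℕ` with the product topology
(`Fin n` being discrete). -/
abbrev C (n : ℕ) : Type := ℕ → Fin n

/-- The group of self-homeomorphisms of the `n`-adic Cantor set. -/
abbrev Γ (n : ℕ) : Type := C n ≃ₜ C n

/-- Prepend a letter to an infinite sequence. -/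
def cons {n : ℕ} (a : Fin n) (s : C n) : C n
  | 0 => a
  | i + 1 => s i

/-- Prepend a finite word to an infinite sequence. -/
def wcons {n : ℕ} (w : List (Fin n)) (s : C n) : C n := w.foldr cons s

/-- The sum of the letters of a finite word. -/
def dsum {n : ℕ} (w : List (Fin n)) : ℕ := (w.map Fin.val).sum

/-- `f` acts as `core` after the prefix `α` and fixes every sequence not beginning
with `α`. -/
def IsPrefixMap {n : ℕ} (α : List (Fin n)) (core : Γ n) (f : Γ n) : Prop :=
  (∀ η, f (wcons α η) = wcons α (core η)) ∧
  (∀ ξ : C n, (∀ η, ξ ≠ wcons α η) → f ξ = ξ)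

/-- The defining equations of the generator `x₀` of the Brown–Thompson group `F(n)`. -/
def IsX0 (n : ℕ) (hn : 2 ≤ n) (f : Γ n) : Prop :=
  (∀ k : Fin n, (k : ℕ) ≤ n - 2 → ∀ η,
    f (cons ⟨0, by omega⟩ (cons k η)) = cons k η) ∧
  (∀ η, f (cons ⟨0, by omega⟩ (cons ⟨n - 1, by omega⟩ η)) =
    cons ⟨n - 1, by omega⟩ (cons ⟨0, by omega⟩ η)) ∧
  (∀ k : Fin n, 1 ≤ (k : ℕ) → (k : ℕ) ≤ n - 2 → ∀ η,
    f (cons k η) = cons ⟨n - 1, by omega⟩ (cons k η)) ∧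
  (∀ η, f (cons ⟨n - 1, by omega⟩ η) =
    cons ⟨n - 1, by omega⟩ (cons ⟨n - 1, by omega⟩ η))

/-- The defining equations of the generator `x_j`, `1 ≤ j ≤ n - 2`. -/
def IsXMid (n : ℕ) (hn : 2 ≤ n) (j : Fin n) (f : Γ n) : Prop :=
  (∀ k : Fin n, (k : ℕ) < (j : ℕ) → ∀ η, f (cons k η) = cons k η) ∧
  (∀ k m : Fin n, (m : ℕ) = (j : ℕ) + (k : ℕ) → (j : ℕ) + (k : ℕ) ≤ n - 2 → ∀ η,
    f (cons j (cons k η)) = cons m η) ∧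
  (∀ k m : Fin n, n - 1 ≤ (j : ℕ) + (k : ℕ) → (m : ℕ) = (j : ℕ) + (k : ℕ) - (n - 1) → ∀ η,
    f (cons j (cons k η)) = cons ⟨n - 1, by omega⟩ (cons m η)) ∧
  (∀ k : Fin n, (j : ℕ) < (k : ℕ) → (k : ℕ) ≤ n - 2 → ∀ η,
    f (cons k η) = cons ⟨n - 1, by omega⟩ (cons k η)) ∧
  (∀ η, f (cons ⟨n - 1, by omega⟩ η) =
    cons ⟨n - 1, by omega⟩ (cons ⟨n - 1, by omega⟩ η))

/-- The defining equations of the generator `x_{n-1}` (in terms of `x₀`). -/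
def IsXLast (n : ℕ) (hn : 2 ≤ n) (x0 f : Γ n) : Prop :=
  (∀ k : Fin n, (k : ℕ) ≤ n - 2 → ∀ η, f (cons k η) = cons k η) ∧
  (∀ η, f (cons ⟨n - 1, by omega⟩ η) = cons ⟨n - 1, by omega⟩ (x0 η))

/-- `x` is the family `x₀, …, x_{n-1}` of generators of the Brown–Thompson group. -/
def IsXFamily (n : ℕ) (hn : 2 ≤ n) (x : Fin n → Γ n) : Prop :=
  IsX0 n hn (x ⟨0, by omega⟩) ∧
  (∀ j : Fin n, 1 ≤ (j : ℕ) → (j : ℕ) ≤ n - 2 → IsXMid n hn j (x j)) ∧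
  IsXLast n hn (x ⟨0, by omega⟩) (x ⟨n - 1, by omega⟩)

/-- The defining (co)recursive equations of the map `y`. -/
def IsY (n : ℕ) (hn : 2 ≤ n) (f : Γ n) : Prop :=
  (∀ ζ, f (cons ⟨0, by omega⟩ (cons ⟨0, by omega⟩ ζ)) = cons ⟨0, by omega⟩ (f ζ)) ∧
  (∀ k : Fin n, 1 ≤ (k : ℕ) → (k : ℕ) ≤ n - 2 → ∀ ζ,
    f (cons ⟨0, by omega⟩ (cons k ζ)) = cons k ζ) ∧
  (∀ k : Fin n, 1 ≤ (k : ℕ) → (k : ℕ) ≤ n - 2 → ∀ ζ,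
    f (cons k ζ) = cons ⟨n - 1, by omega⟩ (cons k ζ)) ∧
  (∀ ζ, f (cons ⟨0, by omega⟩ (cons ⟨n - 1, by omega⟩ ζ)) =
    cons ⟨n - 1, by omega⟩ (cons ⟨0, by omega⟩ (f⁻¹ ζ))) ∧
  (∀ ζ, f (cons ⟨n - 1, by omega⟩ ζ) =
    cons ⟨n - 1, by omega⟩ (cons ⟨n - 1, by omega⟩ (f ζ)))


/-! ### Basic lemmas -/

variable {n : ℕ}

@[simp] lemma cons_zero (a : Fin n) (s : C n) : cons a s 0 = a := rfl
@[simp] lemma cons_succ (a : Fin n) (s : C n) (i : ℕ) : cons a s (i+1) = s i := rfl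

lemma eta (ξ : C n) : ξ = cons (ξ 0) (fun i => ξ (i+1)) := by
  funext i; cases i <;> rfl

@[simp] lemma wcons_nil (η : C n) : wcons ([] : List (Fin n)) η = η := rfl
@[simp] lemma wcons_cons (a : Fin n) (w : List (Fin n)) (η : C n) :
    wcons (a :: w) η = cons a (wcons w η) := rfl

lemma wcons_append (u v : List (Fin n)) (η : C n) :
    wcons (u ++ v) η = wcons u (wcons v η) :=
  List.foldr_append

lemma mul_apply (f g : Γ n) (ξ : C n) : (f * g) ξ = f (g ξ) := rfl
lemma one_apply (ξ : C n) : (1 : Γ n) ξ = ξ := rfl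
lemma inv_apply_apply (f : Γ n) (ξ : C n) : f⁻¹ (f ξ) = ξ := f.symm_apply_apply ξ
lemma apply_inv_apply (f : Γ n) (ξ : C n) : f (f⁻¹ ξ) = ξ := f.apply_symm_apply ξ
lemma eq_inv_of (f : Γ n) {ξ ζ : C n} (h : f ξ = ζ) : f⁻¹ ζ = ξ := by
  rw [← h, inv_apply_apply]

lemma wcons_coord_ge (w : List (Fin n)) (η : C n) (i : ℕ) :
    wcons w η (w.length + i) = η i := by
  induction w with
  | nil => simp
  | cons a w ih =>
      have h : (a :: w).length + i = (w.length + i) + 1 := by simp; omega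
      rw [wcons_cons, h, cons_succ, ih]

lemma wcons_coord_lt (w : List (Fin n)) (η : C n) (i : ℕ) (h : i < w.length) :
    wcons w η i = w.get ⟨i, h⟩ := by
  induction w generalizing i with
  | nil => simp at h
  | cons a w ih =>
      cases i with
      | zero => rfl
      | succ i => exact ih i (by simpa using h)

lemma exists_wcons (ξ : C n) (w : List (Fin n))
    (h : ∀ i (hi : i < w.length), ξ i = w.get ⟨i, hi⟩) :
    ξ = wcons w (fun i => ξ (w.length + i)) := by
  funext j
  by_cases hj : j < w.length
  · rw [wcons_coord_lt _ _ _ hj]; exact h j hj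
  · have hx : j = w.length + (j - w.length) := by omega
    rw [hx, wcons_coord_ge]

lemma isPrefixMap_nil (c : Γ n) : IsPrefixMap ([] : List (Fin n)) c c :=
  ⟨fun _ => rfl, fun ξ h => absurd rfl (h ξ)⟩

/-! ### Letters and generator equations -/

abbrev lA {n : ℕ} (hn : 2 ≤ n) : Fin n := ⟨n - 1, by omega⟩
abbrev lZ {n : ℕ} (hn : 2 ≤ n) : Fin n := ⟨0, by omega⟩

section Rules

variable {hn : 2 ≤ n} {x : Fin n → Γ n}

lemma e1 (hx : IsXFamily n hn x) (k : Fin n) (hk : (k:ℕ) ≤ n-2) (η : C n) :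
    x (lZ hn) (cons (lZ hn) (cons k η)) = cons k η := hx.1.1 k hk η

lemma e2 (hx : IsXFamily n hn x) (η : C n) :
    x (lZ hn) (cons (lZ hn) (cons (lA hn) η)) = cons (lA hn) (cons (lZ hn) η) :=
  hx.1.2.1 η

lemma e3 (hx : IsXFamily n hn x) (k : Fin n) (h1 : 1 ≤ (k:ℕ)) (h2 : (k:ℕ) ≤ n-2) (η : C n) :
    x (lZ hn) (cons k η) = cons (lA hn) (cons k η) := hx.1.2.2.1 k h1 h2 η

lemma e4 (hx : IsXFamily n hn x) (η : C n) :
    x (lZ hn) (cons (lA hn) η) = cons (lA hn) (cons (lA hn) η) := hx.1.2.2.2 η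

lemma i1 (hx : IsXFamily n hn x) (k : Fin n) (hk : (k:ℕ) ≤ n-2) (η : C n) :
    (x (lZ hn))⁻¹ (cons k η) = cons (lZ hn) (cons k η) :=
  eq_inv_of _ (e1 hx k hk η)

lemma i2 (hx : IsXFamily n hn x) (η : C n) :
    (x (lZ hn))⁻¹ (cons (lA hn) (cons (lZ hn) η)) = cons (lZ hn) (cons (lA hn) η) :=
  eq_inv_of _ (e2 hx η)

lemma i3 (hx : IsXFamily n hn x) (k : Fin n) (h1 : 1 ≤ (k:ℕ)) (h2 : (k:ℕ) ≤ n-2) (η : C n) :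
    (x (lZ hn))⁻¹ (cons (lA hn) (cons k η)) = cons k η :=
  eq_inv_of _ (e3 hx k h1 h2 η)

lemma i4 (hx : IsXFamily n hn x) (η : C n) :
    (x (lZ hn))⁻¹ (cons (lA hn) (cons (lA hn) η)) = cons (lA hn) η :=
  eq_inv_of _ (e4 hx η)

end Rules

/-! ### Localized generators -/

lemma conj_apply (f g h : Γ n) (ξ : C n) : (f * g * h) ξ = f (g (h ξ)) := rfl

lemma trichotomy (a : Fin n) :
    (a:ℕ) = 0 ∨ (1 ≤ (a:ℕ) ∧ (a:ℕ) ≤ n-2) ∨ (a:ℕ) = n-1 := by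
  have := a.isLt; omega

section Loc

variable {hn : 2 ≤ n} {x : Fin n → Γ n}

lemma locA_x0 (hx : IsXFamily n hn x) :
    IsPrefixMap [lA hn] (x (lZ hn)) (x (lA hn)) := by
  constructor
  · intro η; exact hx.2.2.2 η
  · intro ξ hξ
    have h0 : (ξ 0 : ℕ) ≤ n - 2 := by
      by_contra hc
      have hA : ξ 0 = lA hn := by
        apply Fin.ext; have := (ξ 0).isLt; simp only [lA]; omega
      exact hξ (fun i => ξ (i+1))
        (by rw [wcons_cons, wcons_nil, ← hA]; exact eta ξ)
    have h := hx.2.2.1 (ξ 0) h0 (fun i => ξ (i+1))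
    rw [← eta ξ] at h
    exact h

lemma locA_xA (hx : IsXFamily n hn x) :
    IsPrefixMap [lA hn] (x (lA hn)) (x (lZ hn) * x (lA hn) * (x (lZ hn))⁻¹) := by
  have hZle : ((lZ hn : Fin n) : ℕ) ≤ n - 2 := by simp only [lZ]; omega
  constructor
  · intro η
    obtain ⟨b, ζ, rfl⟩ : ∃ b ζ, η = cons b ζ := ⟨η 0, _, eta η⟩
    simp only [wcons_cons, wcons_nil]
    rw [conj_apply]
    rcases trichotomy b with hb | hb | hb
    · have : b = lZ hn := Fin.ext (by simpa using hb)
      subst this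
      rw [i2 hx, hx.2.2.1 (lZ hn) hZle (cons (lA hn) ζ), e2 hx,
        hx.2.2.1 (lZ hn) hZle ζ]
      try rfl
    · rw [i3 hx b hb.1 hb.2, hx.2.2.1 b hb.2 ζ, e3 hx b hb.1 hb.2]
      try rfl
    · have : b = lA hn := Fin.ext (by simpa using hb)
      subst this
      rw [i4 hx, hx.2.2.2 ζ, e4 hx]
      try rfl
  · intro ξ hξ
    have h0 : (ξ 0 : ℕ) ≤ n - 2 := by
      by_contra hc
      have hA : ξ 0 = lA hn := by
        apply Fin.ext; have := (ξ 0).isLt; simp only [lA]; omega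
      exact hξ (fun i => ξ (i+1))
        (by rw [wcons_cons, wcons_nil, ← hA]; exact eta ξ)
    have key : x (lZ hn) (x (lA hn) ((x (lZ hn))⁻¹
        (cons (ξ 0) (fun i => ξ (i+1))))) = cons (ξ 0) (fun i => ξ (i+1)) := by
      rw [i1 hx _ h0, hx.2.2.1 (lZ hn) hZle, e1 hx _ h0]
    rw [conj_apply]
    conv_lhs => rw [eta ξ]
    rw [key]; exact (eta ξ).symm

lemma locA_xj (hx : IsXFamily n hn x) (j : Fin n) (hj1 : 1 ≤ (j:ℕ)) (hj2 : (j:ℕ) ≤ n-2) :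
    IsPrefixMap [lA hn] (x j) (x (lZ hn) * x j * (x (lZ hn))⁻¹) := by
  have H := hx.2.1 j hj1 hj2
  have hZlt : ((lZ hn : Fin n) : ℕ) < (j:ℕ) := by simp only [lZ]; omega
  constructor
  · intro η
    obtain ⟨b, ζ, rfl⟩ : ∃ b ζ, η = cons b ζ := ⟨η 0, _, eta η⟩
    simp only [wcons_cons, wcons_nil]
    rw [conj_apply]
    have hcases : (b:ℕ) = 0 ∨ (1 ≤ (b:ℕ) ∧ (b:ℕ) ≤ n-2 ∧ (b:ℕ) < (j:ℕ)) ∨ (b:ℕ) = (j:ℕ)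
        ∨ ((j:ℕ) < (b:ℕ) ∧ (b:ℕ) ≤ n-2) ∨ (b:ℕ) = n-1 := by
      have := b.isLt; omega
    rcases hcases with hb | hb | hb | hb | hb
    · have : b = lZ hn := Fin.ext (by simpa using hb)
      subst this
      rw [i2 hx, H.1 (lZ hn) hZlt (cons (lA hn) ζ), e2 hx, H.1 (lZ hn) hZlt ζ]
      try rfl
    · rw [i3 hx b hb.1 hb.2.1, H.1 b hb.2.2, e3 hx b hb.1 hb.2.1]
      try rfl
    · have hbj : b = j := Fin.ext hb
      rw [hbj]
      rw [i3 hx j hj1 hj2]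
      obtain ⟨k, ζ', rfl⟩ : ∃ k ζ', ζ = cons k ζ' := ⟨ζ 0, _, eta ζ⟩
      by_cases hs : (j:ℕ) + (k:ℕ) ≤ n - 2
      · rw [H.2.1 k ⟨(j:ℕ)+(k:ℕ), by omega⟩ rfl hs,
          e3 hx ⟨(j:ℕ)+(k:ℕ), by omega⟩ (by simp; omega) (by simp; omega)]
        try rfl
      · have hge : n - 1 ≤ (j:ℕ) + (k:ℕ) := by omega
        rw [H.2.2.1 k ⟨(j:ℕ)+(k:ℕ)-(n-1), by have := k.isLt; omega⟩ hge rfl, e4 hx]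
        try rfl
    · rw [i3 hx b (by omega) hb.2, H.2.2.2.1 b hb.1 hb.2, e4 hx]
      try rfl
    · have : b = lA hn := Fin.ext (by simpa using hb)
      subst this
      rw [i4 hx, H.2.2.2.2 ζ, e4 hx]
      try rfl
  · intro ξ hξ
    have h0 : (ξ 0 : ℕ) ≤ n - 2 := by
      by_contra hc
      have hA : ξ 0 = lA hn := by
        apply Fin.ext; have := (ξ 0).isLt; simp only [lA]; omega
      exact hξ (fun i => ξ (i+1))
        (by rw [wcons_cons, wcons_nil, ← hA]; exact eta ξ)
    have key : x (lZ hn) (x j ((x (lZ hn))⁻¹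
        (cons (ξ 0) (fun i => ξ (i+1))))) = cons (ξ 0) (fun i => ξ (i+1)) := by
      rw [i1 hx _ h0, H.1 (lZ hn) hZlt, e1 hx _ h0]
    rw [conj_apply]
    conv_lhs => rw [eta ξ]
    rw [key]; exact (eta ξ).symm

lemma locStep (hx : IsXFamily n hn x) (u : List (Fin n)) (c f : Γ n)
    (hf : IsPrefixMap (lA hn :: u) c f) :
    IsPrefixMap (lA hn :: lA hn :: u) c (x (lZ hn) * f * (x (lZ hn))⁻¹) := by
  constructor
  · intro η
    simp only [wcons_cons]
    rw [conj_apply, i4 hx]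
    have h := hf.1 η
    simp only [wcons_cons] at h
    rw [h, e4 hx]
  · intro ξ hξ
    rw [conj_apply]
    have hnot : ∀ η, (x (lZ hn))⁻¹ ξ ≠ wcons (lA hn :: u) η := by
      intro η hEq
      apply hξ η
      have h2 : x (lZ hn) ((x (lZ hn))⁻¹ ξ) = x (lZ hn) (wcons (lA hn :: u) η) := by
        rw [hEq]
      rw [apply_inv_apply] at h2
      rw [h2]
      simp only [wcons_cons]
      rw [e4 hx]
    rw [hf.2 _ hnot, apply_inv_apply]

lemma locPow (hx : IsXFamily n hn x) (K : Subgroup (Γ n)) (hxK : ∀ j, x j ∈ K)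
    (m : ℕ) (j : Fin n) :
    ∃ f, f ∈ K ∧ IsPrefixMap (List.replicate m (lA hn)) (x j) f := by
  induction m with
  | zero => exact ⟨x j, hxK j, isPrefixMap_nil _⟩
  | succ k ih =>
    cases k with
    | zero =>
      simp only [List.replicate_succ, List.replicate_zero]
      rcases trichotomy j with hj | hj | hj
      · have : j = lZ hn := Fin.ext (by simpa using hj)
        subst this
        exact ⟨x (lA hn), hxK _, locA_x0 hx⟩
      · exact ⟨_, mul_mem (mul_mem (hxK _) (hxK j)) (inv_mem (hxK _)),
          locA_xj hx j hj.1 hj.2⟩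
      · have : j = lA hn := Fin.ext (by simpa using hj)
        subst this
        exact ⟨_, mul_mem (mul_mem (hxK _) (hxK _)) (inv_mem (hxK _)), locA_xA hx⟩
    | succ k' =>
      obtain ⟨f, hfK, hf⟩ := ih
      simp only [List.replicate_succ] at hf ⊢
      exact ⟨_, mul_mem (mul_mem (hxK _) hfK) (inv_mem (hxK _)),
        locStep hx _ _ _ hf⟩

end Loc

/-! ### Reachability between cylinders -/

def Reach (K : Subgroup (Γ n)) (u v : List (Fin n)) : Prop :=
  ∃ h, h ∈ K ∧ ∀ η, h (wcons u η) = wcons v η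

lemma reach_refl (K : Subgroup (Γ n)) (u : List (Fin n)) : Reach K u u :=
  ⟨1, one_mem K, fun _ => rfl⟩

lemma reach_symm {K : Subgroup (Γ n)} {u v : List (Fin n)}
    (h : Reach K u v) : Reach K v u := by
  obtain ⟨h, hK, hr⟩ := h
  exact ⟨h⁻¹, inv_mem hK, fun η => eq_inv_of _ (hr η)⟩

lemma reach_trans {K : Subgroup (Γ n)} {u v t : List (Fin n)}
    (h1 : Reach K u v) (h2 : Reach K v t) : Reach K u t := by
  obtain ⟨f, hfK, hf⟩ := h1
  obtain ⟨g, hgK, hg⟩ := h2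
  exact ⟨g * f, mul_mem hgK hfK, fun η => by rw [mul_apply, hf, hg]⟩

lemma reach_append {K : Subgroup (Γ n)} {u v : List (Fin n)}
    (h : Reach K u v) (e : List (Fin n)) : Reach K (u ++ e) (v ++ e) := by
  obtain ⟨h, hK, hr⟩ := h
  exact ⟨h, hK, fun η => by rw [wcons_append, wcons_append, hr]⟩

lemma reach_loc {K : Subgroup (Γ n)} {c f : Γ n} {u p q : List (Fin n)}
    (hfK : f ∈ K) (hpm : IsPrefixMap u c f)
    (hrule : ∀ η, c (wcons p η) = wcons q η) :
    Reach K (u ++ p) (u ++ q) :=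
  ⟨f, hfK, fun η => by rw [wcons_append, hpm.1, hrule, wcons_append]⟩

section MainReach

variable {hn : 2 ≤ n} {x : Fin n → Γ n} {K : Subgroup (Γ n)}

/-- `repl m ++ (A :: t) = repl (m+1) ++ t`. -/
lemma eqRepl (hn : 2 ≤ n) (m : ℕ) (t : List (Fin n)) :
    List.replicate m (lA hn) ++ (lA hn :: t) = List.replicate (m+1) (lA hn) ++ t := by
  rw [List.replicate_succ']
  simp [List.append_assoc]

-- localized rules, in cons form
lemma ruleR1 (hx : IsXFamily n hn x) (hxK : ∀ j, x j ∈ K) (m : ℕ)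
    (b : Fin n) (hb : (b:ℕ) ≤ n-2) (t : List (Fin n)) :
    Reach K (List.replicate m (lA hn) ++ (lZ hn :: b :: t))
            (List.replicate m (lA hn) ++ (b :: t)) := by
  obtain ⟨f, hfK, hf⟩ := locPow hx K hxK m (lZ hn)
  have := reach_append (reach_loc hfK hf
    (p := [lZ hn, b]) (q := [b]) (fun η => e1 hx b hb η)) t
  simpa [List.append_assoc] using this

lemma ruleR2 (hx : IsXFamily n hn x) (hxK : ∀ j, x j ∈ K) (m : ℕ) (t : List (Fin n)) :
    Reach K (List.replicate m (lA hn) ++ (lZ hn :: lA hn :: t))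
            (List.replicate (m+1) (lA hn) ++ (lZ hn :: t)) := by
  obtain ⟨f, hfK, hf⟩ := locPow hx K hxK m (lZ hn)
  have := reach_append (reach_loc hfK hf
    (p := [lZ hn, lA hn]) (q := [lA hn, lZ hn]) (fun η => e2 hx η)) t
  rw [← eqRepl]
  simpa [List.append_assoc] using this

lemma ruleR4 (hx : IsXFamily n hn x) (hxK : ∀ j, x j ∈ K) (m : ℕ) (t : List (Fin n)) :
    Reach K (List.replicate (m+1) (lA hn) ++ t)
            (List.replicate (m+2) (lA hn) ++ t) := by
  obtain ⟨f, hfK, hf⟩ := locPow hx K hxK m (lZ hn)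
  have := reach_append (reach_loc hfK hf
    (p := [lA hn]) (q := [lA hn, lA hn]) (fun η => e4 hx η)) t
  rw [← eqRepl, ← eqRepl, ← eqRepl]
  simpa [List.append_assoc] using this

lemma ruleMid1 (hx : IsXFamily n hn x) (hxK : ∀ j, x j ∈ K) (m : ℕ)
    (a b : Fin n) (ha1 : 1 ≤ (a:ℕ)) (ha2 : (a:ℕ) ≤ n-2)
    (hs : (a:ℕ) + (b:ℕ) ≤ n-2) (t : List (Fin n)) :
    Reach K (List.replicate m (lA hn) ++ (a :: b :: t))
            (List.replicate m (lA hn) ++ ((⟨(a:ℕ)+(b:ℕ), by omega⟩ : Fin n) :: t)) := by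
  obtain ⟨f, hfK, hf⟩ := locPow hx K hxK m a
  have := reach_append (reach_loc hfK hf
    (p := [a, b]) (q := [(⟨(a:ℕ)+(b:ℕ), by omega⟩ : Fin n)])
    (fun η => (hx.2.1 a ha1 ha2).2.1 b _ rfl hs η)) t
  simpa [List.append_assoc] using this

lemma ruleMid2 (hx : IsXFamily n hn x) (hxK : ∀ j, x j ∈ K) (m : ℕ)
    (a b : Fin n) (ha1 : 1 ≤ (a:ℕ)) (ha2 : (a:ℕ) ≤ n-2)
    (hs : n - 1 ≤ (a:ℕ) + (b:ℕ)) (t : List (Fin n)) :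
    Reach K (List.replicate m (lA hn) ++ (a :: b :: t))
            (List.replicate (m+1) (lA hn) ++
              ((⟨(a:ℕ)+(b:ℕ)-(n-1), by have := a.isLt; have := b.isLt; omega⟩ : Fin n) :: t)) := by
  obtain ⟨f, hfK, hf⟩ := locPow hx K hxK m a
  have := reach_append (reach_loc hfK hf
    (p := [a, b]) (q := [lA hn, (⟨(a:ℕ)+(b:ℕ)-(n-1), by have := a.isLt; have := b.isLt; omega⟩ : Fin n)])
    (fun η => (hx.2.1 a ha1 ha2).2.2.1 b _ hs rfl η)) t
  rw [← eqRepl]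
  simpa [List.append_assoc] using this

/-- `Reach (A^(k+1) ++ [0]) [A, 0]`. -/
lemma reach_pow0 (hx : IsXFamily n hn x) (hxK : ∀ j, x j ∈ K) (k : ℕ) :
    Reach K (List.replicate (k+1) (lA hn) ++ [lZ hn]) [lA hn, lZ hn] := by
  induction k with
  | zero => exact reach_refl K _
  | succ k ih =>
    exact reach_trans (reach_symm (ruleR4 hx hxK k [lZ hn])) ih

end MainReach

section MainReach2

variable {hn : 2 ≤ n} {x : Fin n → Γ n} {K : Subgroup (Γ n)}

lemma main_reach (hx : IsXFamily n hn x) (hxK : ∀ j, x j ∈ K) :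
    ∀ (L : ℕ) (s : List (Fin n)) (m : ℕ), s.length ≤ L →
      ∃ e, Reach K (List.replicate m (lA hn) ++ (s ++ e)) [lA hn, lZ hn] := by
  intro L
  induction L with
  | zero =>
    intro s m hlen
    have hs : s = [] := List.eq_nil_of_length_eq_zero (by omega)
    subst hs
    cases m with
    | zero => exact ⟨[lA hn, lZ hn], by simpa using reach_refl K [lA hn, lZ hn]⟩
    | succ k => exact ⟨[lZ hn], by simpa using reach_pow0 hx hxK k⟩
  | succ L ih =>
    intro s m hlen
    cases s with
    | nil =>
      cases m with
      | zero => exact ⟨[lA hn, lZ hn], by simpa using reach_refl K [lA hn, lZ hn]⟩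
      | succ k => exact ⟨[lZ hn], by simpa using reach_pow0 hx hxK k⟩
    | cons a s' =>
      rcases trichotomy a with ha | ha | ha
      · -- a = 0
        have haZ : a = lZ hn := Fin.ext (by simpa using ha)
        subst haZ
        cases s' with
        | nil =>
          refine ⟨[lA hn], ?_⟩
          have h1 := ruleR2 hx hxK m ([] : List (Fin n))
          have h2 := reach_pow0 hx hxK m
          exact reach_trans (by simpa using h1) (by simpa using h2)
        | cons b s'' =>
          rcases trichotomy b with hb | hb | hb
          · -- b = 0 : R1 with b ≤ n-2
            obtain ⟨e, he⟩ := ih (b :: s'') m (by simp at hlen ⊢; omega)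
            refine ⟨e, reach_trans ?_ he⟩
            have := ruleR1 hx hxK m b (by omega) (s'' ++ e)
            simpa using this
          · obtain ⟨e, he⟩ := ih (b :: s'') m (by simp at hlen ⊢; omega)
            refine ⟨e, reach_trans ?_ he⟩
            have := ruleR1 hx hxK m b (by omega) (s'' ++ e)
            simpa using this
          · -- b = A : R2
            have hbA : b = lA hn := Fin.ext (by simpa using hb)
            subst hbA
            obtain ⟨e, he⟩ := ih (lZ hn :: s'') (m+1) (by simp at hlen ⊢; omega)
            refine ⟨e, reach_trans ?_ he⟩
            have := ruleR2 hx hxK m (s'' ++ e)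
            simpa using this
      · -- a mid
        cases s' with
        | nil =>
          refine ⟨[⟨n-1-(a:ℕ), by omega⟩], ?_⟩
          have h1 := ruleMid2 hx hxK m a ⟨n-1-(a:ℕ), by omega⟩ ha.1 ha.2
            (by simp; omega) ([] : List (Fin n))
          have h2 := reach_pow0 hx hxK m
          refine reach_trans (by simpa using h1) ?_
          have he : (⟨(a:ℕ)+(n-1-(a:ℕ))-(n-1), by have := a.isLt; omega⟩ : Fin n) = lZ hn := by
            apply Fin.ext; simp; omega
          rw [he] at h1 ⊢
          simpa using h2
        | cons b s'' =>
          by_cases hs : (a:ℕ) + (b:ℕ) ≤ n - 2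
          · obtain ⟨e, he⟩ := ih ((⟨(a:ℕ)+(b:ℕ), by omega⟩ : Fin n) :: s'') m
              (by simp at hlen ⊢; omega)
            refine ⟨e, reach_trans ?_ he⟩
            have := ruleMid1 hx hxK m a b ha.1 ha.2 hs (s'' ++ e)
            simpa using this
          · obtain ⟨e, he⟩ := ih
              ((⟨(a:ℕ)+(b:ℕ)-(n-1), by have := a.isLt; have := b.isLt; omega⟩ : Fin n) :: s'')
              (m+1) (by simp at hlen ⊢; omega)
            refine ⟨e, reach_trans ?_ he⟩
            have := ruleMid2 hx hxK m a b ha.1 ha.2 (by omega) (s'' ++ e)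
            simpa using this
      · -- a = A
        have haA : a = lA hn := Fin.ext (by simpa using ha)
        subst haA
        obtain ⟨e, he⟩ := ih s' (m+1) (by simp at hlen ⊢; omega)
        refine ⟨e, ?_⟩
        have heq : List.replicate m (lA hn) ++ ((lA hn :: s') ++ e)
            = List.replicate (m+1) (lA hn) ++ (s' ++ e) := by
          rw [← eqRepl]; simp
        rw [heq]
        exact he

end MainReach2

/-! ### A nontrivial element supported in any cylinder -/

lemma exists_supported (hn : 2 ≤ n) {x : Fin n → Γ n} (hx : IsXFamily n hn x)
    {ycore y10 : Γ n} (hy : IsY n hn ycore)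
    (hy10 : IsPrefixMap [lA hn, lZ hn] ycore y10)
    {K : Subgroup (Γ n)} (hxK : ∀ j, x j ∈ K) (hy10K : y10 ∈ K) (w : List (Fin n)) :
    ∃ g, g ∈ K ∧ (∀ ξ, (∀ η, ξ ≠ wcons w η) → g ξ = ξ) ∧ g ≠ 1 := by
  obtain ⟨e, hwit⟩ := main_reach hx hxK w.length w 0 le_rfl
  obtain ⟨h, hK, hr⟩ := hwit
  simp only [List.replicate_zero, List.nil_append] at hr
  refine ⟨h⁻¹ * y10 * h, mul_mem (mul_mem (inv_mem hK) hy10K) hK, ?_, ?_⟩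
  · intro ξ hξ
    rw [conj_apply]
    have hnot : ∀ η, h ξ ≠ wcons [lA hn, lZ hn] η := by
      intro η hEq
      have h2 := eq_inv_of h (hr η)
      rw [← hEq, inv_apply_apply] at h2
      exact hξ (wcons e η) (by rw [h2, wcons_append])
    rw [hy10.2 _ hnot, inv_apply_apply]
  · intro hg1
    have hmoved : (h⁻¹ * y10 * h)
        (wcons (w ++ e) (cons (lZ hn) (cons (lA hn) (fun _ => lZ hn)))) =
        wcons (w ++ e) (cons (lZ hn) (cons (lA hn) (fun _ => lZ hn))) := by
      rw [hg1]; rfl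
    rw [conj_apply, hr, hy10.1, hy.2.2.2.1,
      eq_inv_of h (hr (cons (lA hn) (cons (lZ hn) (ycore⁻¹ (fun _ => lZ hn)))))] at hmoved
    have hco := congrFun hmoved ((w ++ e).length + 0)
    rw [wcons_coord_ge, wcons_coord_ge] at hco
    simp only [cons_zero] at hco
    have := congrArg Fin.val hco
    simp only [lA, lZ] at this
    omega

/-! ### Triviality of the center -/

lemma center_trivial_of (H K : Subgroup (Γ n)) (hsub : K ≤ H)
    (hsupp : ∀ w : List (Fin n),
      ∃ g, g ∈ K ∧ (∀ ξ, (∀ η, ξ ≠ wcons w η) → g ξ = ξ) ∧ g ≠ 1) :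
    Subgroup.center ↥H = ⊥ := by
  rw [eq_bot_iff]
  intro z hz
  rw [Subgroup.mem_bot]
  by_contra hz1
  have hzΓ : (z : Γ n) ≠ 1 := fun hc => hz1 (Subtype.ext hc)
  have hmoved : ∃ ξ, (z : Γ n) ξ ≠ ξ := by
    by_contra hc; push_neg at hc; exact hzΓ (Homeomorph.ext hc)
  obtain ⟨ξ, hξ⟩ := hmoved
  have hcoord : ∃ m, (z : Γ n) ξ m ≠ ξ m := by
    by_contra hc; push_neg at hc; exact hξ (funext hc)
  obtain ⟨m, hm⟩ := hcoord
  -- continuity: a cylinder around ξ on which coordinate m of the image is constant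
  obtain ⟨N, hN⟩ : ∃ N, ∀ ζ : C n, (∀ i, i < N → ζ i = ξ i) →
      (z : Γ n) ζ m = (z : Γ n) ξ m := by
    have hopen : IsOpen {ζ : C n | (z : Γ n) ζ m = (z : Γ n) ξ m} := by
      have : {ζ : C n | (z : Γ n) ζ m = (z : Γ n) ξ m}
          = (fun ζ : C n => (z : Γ n) ζ m) ⁻¹' {(z : Γ n) ξ m} := rfl
      rw [this]
      exact ((continuous_apply m).comp (z : Γ n).continuous).isOpen_preimage _
        (isOpen_discrete _)
    obtain ⟨I, u, hu, hsubs⟩ := (isOpen_pi_iff.mp hopen) ξ rfl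
    refine ⟨I.sup id + 1, fun ζ hζ => hsubs ?_⟩
    intro i hi
    have : ζ i = ξ i := hζ i (by
      have := Finset.le_sup (f := id) hi
      simp only [id] at this
      omega)
    rw [this]
    exact (hu i hi).2
  set L := N + m + 1 with hL
  obtain ⟨w, hwlen, hwget⟩ : ∃ w : List (Fin n), w.length = L ∧
      ∀ i (hi : i < w.length), w.get ⟨i, hi⟩ = ξ i := by
    refine ⟨List.ofFn (fun i : Fin L => ξ i), by simp [hL], ?_⟩
    intro i hi
    rw [List.get_ofFn]
    rfl
  obtain ⟨g, hgK, hgsupp, hg1⟩ := hsupp w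
  apply hg1
  apply Homeomorph.ext
  intro ζ
  show g ζ = ζ
  by_cases hmem : ∃ η, ζ = wcons w η
  · obtain ⟨η, rfl⟩ := hmem
    have hcoords : ∀ i, i < N → (wcons w η) i = ξ i := by
      intro i hi
      have hilt : i < w.length := by omega
      rw [wcons_coord_lt _ _ _ hilt, hwget]
    have hzval : (z : Γ n) (wcons w η) m = (z : Γ n) ξ m := hN _ hcoords
    have hznot : ∀ η', (z : Γ n) (wcons w η) ≠ wcons w η' := by
      intro η' hEq
      apply hm
      have hmlt : m < w.length := by omega
      rw [← hzval, hEq, wcons_coord_lt _ _ _ hmlt, hwget]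
    have hfix : g ((z : Γ n) (wcons w η)) = (z : Γ n) (wcons w η) :=
      hgsupp _ hznot
    have hcomm := Subgroup.mem_center_iff.mp hz ⟨g, hsub hgK⟩
    have hcommΓ : g * (z : Γ n) = (z : Γ n) * g := congrArg Subtype.val hcomm
    have happ := congrArg (fun f : Γ n => f (wcons w η)) hcommΓ
    simp only [mul_apply] at happ
    -- happ : g ((z:Γ n) (wcons w η)) = (z:Γ n) (g (wcons w η))
    rw [hfix] at happ
    exact ((z : Γ n).injective happ.symm)
  · push_neg at hmem
    exact hgsupp _ hmem

theorem lodhaMoore_center_trivial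
    (n : ℕ) (hn : 2 ≤ n) (x : Fin n → Γ n) (hx : IsXFamily n hn x)
    (ycore : Γ n) (hy : IsY n hn ycore)
    (y10 : Γ n) (hy10 : IsPrefixMap [⟨n - 1, by omega⟩, ⟨0, by omega⟩] ycore y10)
    (y0 : Γ n) (hy0 : IsPrefixMap [⟨0, by omega⟩] ycore y0)
    (y1 : Γ n) (hy1 : IsPrefixMap [⟨n - 1, by omega⟩] ycore y1)
    (G0 : Subgroup (Γ n)) (hG0 : G0 = Subgroup.closure (Set.range x ∪ {y10}))
    (yG : Subgroup (Γ n)) (hyG : yG = Subgroup.closure (Set.range x ∪ {y10, y0}))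
    (Gy : Subgroup (Γ n)) (hGy : Gy = Subgroup.closure (Set.range x ∪ {y10, y1}))
    (yGy : Subgroup (Γ n)) (hyGy : yGy = Subgroup.closure (Set.range x ∪ {y10, y0, y1})) :
    Subgroup.center ↥G0 = ⊥ ∧ Subgroup.center ↥yG = ⊥ ∧
    Subgroup.center ↥Gy = ⊥ ∧ Subgroup.center ↥yGy = ⊥ := by
  set K : Subgroup (Γ n) := Subgroup.closure (Set.range x ∪ {y10}) with hKdef
  have hxK : ∀ j, x j ∈ K := fun j =>
    Subgroup.subset_closure (Set.mem_union_left _ ⟨j, rfl⟩)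
  have hy10K : y10 ∈ K := Subgroup.subset_closure (Set.mem_union_right _ rfl)
  have hy10' : IsPrefixMap [lA hn, lZ hn] ycore y10 := hy10
  have hsupp := exists_supported hn hx hy hy10' hxK hy10K
  have hsub1 : K ≤ Subgroup.closure (Set.range x ∪ {y10, y0}) :=
    Subgroup.closure_mono (Set.union_subset_union_right _ (by
      intro a ha; simp only [Set.mem_singleton_iff] at ha; simp [ha]))
  have hsub2 : K ≤ Subgroup.closure (Set.range x ∪ {y10, y1}) :=
    Subgroup.closure_mono (Set.union_subset_union_right _ (by
      intro a ha; simp only [Set.mem_singleton_iff] at ha; simp [ha]))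
  have hsub3 : K ≤ Subgroup.closure (Set.range x ∪ {y10, y0, y1}) :=
    Subgroup.closure_mono (Set.union_subset_union_right _ (by
      intro a ha; simp only [Set.mem_singleton_iff] at ha; simp [ha]))
  refine ⟨?_, ?_, ?_, ?_⟩
  · rw [hG0]; exact center_trivial_of _ K le_rfl hsupp
  · rw [hyG]; exact center_trivial_of _ K hsub1 hsupp
  · rw [hGy]; exact center_trivial_of _ K hsub2 hsupp
  · rw [hyGy]; exact center_trivial_of _ K hsub3 hsupp

end LM
end

section
/- Let G be a group whose commutator subgroup [G,G] is simple, and suppose that G has no abelian subgroup of finite index (i.e., G is not virtually abelian). Then every subgroup H of G of finite index satisfies [H,H] = [G,G]. Consequently, the abelianization H/[H,H] = H/[G,G] is isomorphic (via the natural inclusion) to a finite-index subgroup of the abelianization G/[G,G]. -/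
theorem commutator_of_finite_index_subgroup
    {G : Type*} [Group G]
    (hsimple : IsSimpleGroup ↥(commutator G))
    (hnva : ∀ A : Subgroup G, A.index ≠ 0 → ¬IsMulCommutative ↥A)
    (H : Subgroup G) (hH : H.index ≠ 0) :
    ⁅H, H⁆ = commutator G ∧
    (H.map (Abelianization.of : G →* Abelianization G)).index ≠ 0 ∧
    ∃ e : Abelianization ↥H ≃* ↥(H.map (Abelianization.of : G →* Abelianization G)),
      ∀ h : ↥H, e (Abelianization.of h) =
        ⟨Abelianization.of (h : G), Subgroup.mem_map_of_mem _ h.2⟩ := by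
  haveI : H.FiniteIndex := ⟨hH⟩
  set N := H.normalCore with hN
  haveI : N.FiniteIndex := Subgroup.finiteIndex_normalCore H
  haveI : (⁅N, N⁆ : Subgroup G).Normal := Subgroup.commutator_normal N N
  have hNle : (⁅N, N⁆ : Subgroup G) ≤ commutator G :=
    Subgroup.commutator_mono le_top le_top
  -- step 1: ⁅H,H⁆ = commutator G
  have h1 : ⁅H, H⁆ = commutator G := by
    rcases hsimple.eq_bot_or_eq_top_of_normal ((⁅N, N⁆).subgroupOf (commutator G))
      inferInstance with hbot | htop
    · exfalso
      rw [Subgroup.subgroupOf_eq_bot] at hbot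
      have : (⁅N, N⁆ : Subgroup G) = ⊥ :=
        le_bot_iff.mp (hbot.mono_right hNle le_rfl le_rfl)
      rw [Subgroup.commutator_eq_bot_iff_le_centralizer] at this
      exact hnva N Subgroup.FiniteIndex.index_ne_zero (Subgroup.le_centralizer_iff_isMulCommutative.mp this)
    · rw [Subgroup.subgroupOf_eq_top] at htop
      refine le_antisymm (Subgroup.commutator_mono le_top le_top) ?_
      exact htop.trans (Subgroup.commutator_mono H.normalCore_le H.normalCore_le)
  have hcomm_le_H : commutator G ≤ H := h1 ▸ Subgroup.commutator_le.mpr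
    (fun g₁ h₁ g₂ h₂ => H.mul_mem (H.mul_mem (H.mul_mem h₁ h₂) (H.inv_mem h₁)) (H.inv_mem h₂))
  have hker : (Abelianization.of : G →* Abelianization G).ker = commutator G := by
    ext x
    exact QuotientGroup.eq_one_iff x
  -- step 2: index nonzero
  have h2 : (H.map (Abelianization.of : G →* Abelianization G)).index ≠ 0 := by
    have hdvd : (H.map (Abelianization.of : G →* Abelianization G)).index ∣ H.index :=
      Subgroup.index_map_dvd (H := H) (f := (Abelianization.of : G →* Abelianization G)) (fun y => QuotientGroup.mk_surjective y)
    exact fun h0 => hH (Nat.eq_zero_of_zero_dvd (h0 ▸ hdvd))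
  refine ⟨h1, h2, ?_⟩
  -- step 3: the isomorphism
  set M := H.map (Abelianization.of : G →* Abelianization G) with hM
  let φ : ↥H →* ↥M :=
    (Abelianization.of.comp H.subtype).codRestrict M
      (fun h => Subgroup.mem_map_of_mem _ h.2)
  let ψ : Abelianization ↥H →* ↥M := Abelianization.lift φ
  have hψ : ∀ h : ↥H, ψ (Abelianization.of h) =
      ⟨Abelianization.of (h : G), Subgroup.mem_map_of_mem _ h.2⟩ := fun h => rfl
  have hinj : Function.Injective ψ := by
    rw [injective_iff_map_eq_one]
    intro a ha
    obtain ⟨h, rfl⟩ := QuotientGroup.mk_surjective a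
    have h1' : Abelianization.of (h : G) = 1 := by
      have := congrArg Subtype.val (hψ h ▸ ha)
      exact this
    have hmem : (h : G) ∈ commutator G := (QuotientGroup.eq_one_iff _).mp h1'
    rw [← h1] at hmem
    have : (h : G) ∈ (commutator ↥H).map H.subtype := by
      rwa [commutator_def, Subgroup.map_commutator, ← MonoidHom.range_eq_map,
        H.range_subtype]
    obtain ⟨k, hk, hkh⟩ := this
    have : k = h := Subtype.ext hkh
    subst this
    exact (QuotientGroup.eq_one_iff _).mpr hk
  have hsurj : Function.Surjective ψ := by
    rintro ⟨y, hy⟩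
    obtain ⟨x, hx, rfl⟩ := hy
    exact ⟨Abelianization.of (⟨x, hx⟩ : ↥H), rfl⟩
  exact ⟨MulEquiv.ofBijective ψ ⟨hinj, hsurj⟩, hψ⟩
end
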